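/- arXiv:1708.06325 — 3 statements merged into one kernel-verified Lean document; each statement's English description precedes it below -/
import Mathlib

section
/- There exist rational numbers b'_0, b'_1, b'_2, … with b'_0 = 1 and b'_1 = 2 such that for every k ≥ 1 and every integer g, s'_{k,g} = Σ_{l=0}^{k} b'_l · s'_{k-l, g-1}, where s'_{k,g} = 2^k · binom(g - 2k + 1, k). -/
/-- Generalized binomial coefficient `n(n-1)⋯(n-k+1)/k!` as a rational number. -/
noncomputable def gbinom (n : ℤ) (k : ℕ) : ℚ :=
  (∏ i ∈ Finset.range k, ((n : ℚ) - i)) / (Nat.factorial k)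

/-- `s'_{k,g} = 2^k · binom(g - 2k + 1, k)`. -/
noncomputable def sPrime (k : ℕ) (g : ℤ) : ℚ :=
  2 ^ k * gbinom (g - 2 * k + 1) k

lemma gbinom_zero (n : ℤ) : gbinom n 0 = 1 := by simp [gbinom]

lemma sPrime_zero (g : ℤ) : sPrime 0 g = 1 := by simp [sPrime, gbinom]

lemma gbinom_pascal (n : ℤ) (j : ℕ) :
    gbinom n (j + 1) = gbinom (n - 1) (j + 1) + gbinom (n - 1) j := by
  have h1 : (∏ i ∈ Finset.range (j + 1), ((n : ℚ) - i))
      = (∏ i ∈ Finset.range j, (((n - 1 : ℤ) : ℚ) - i)) * (n : ℚ) := by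
    rw [Finset.prod_range_succ' (fun i => (n : ℚ) - i) j]
    push_cast
    ring_nf
  have h2 : (∏ i ∈ Finset.range (j + 1), (((n - 1 : ℤ) : ℚ) - i))
      = (∏ i ∈ Finset.range j, (((n - 1 : ℤ) : ℚ) - i)) * (((n : ℚ) - 1) - j) := by
    rw [Finset.prod_range_succ]
    push_cast
    ring_nf
  unfold gbinom
  rw [h1, h2, Nat.factorial_succ]
  have hj : (Nat.factorial j : ℚ) ≠ 0 := by positivity
  have hj1 : ((j : ℚ) + 1) ≠ 0 := by positivity
  field_simp
  push_cast
  ring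

lemma sPrime_pascal (j : ℕ) (g : ℤ) :
    sPrime (j + 1) g = sPrime (j + 1) (g - 1) + 2 * sPrime j (g - 3) := by
  unfold sPrime
  have e1 : g - 1 - 2 * (↑(j + 1)) + 1 = (g - 2 * (↑(j + 1)) + 1) - 1 := by push_cast; ring
  have e2 : g - 3 - 2 * (j : ℤ) + 1 = (g - 2 * (↑(j + 1)) + 1) - 1 := by push_cast; ring
  rw [e1, e2, gbinom_pascal (g - 2 * (↑(j + 1)) + 1) j]
  ring

noncomputable def bb : ℕ → ℚ
  | k => sPrime k 0 - ∑ l ∈ (Finset.range k).attach, bb l * sPrime (k - l) (-1)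
decreasing_by exact Finset.mem_range.mp l.2

lemma bb_def (k : ℕ) :
    bb k = sPrime k 0 - ∑ l ∈ Finset.range k, bb l * sPrime (k - l) (-1) := by
  rw [bb, ← Finset.sum_attach (Finset.range k) (fun l => bb l * sPrime (k - l) (-1))]

lemma key : ∀ k : ℕ, ∀ g : ℤ,
    sPrime k g - ∑ l ∈ Finset.range k, bb l * sPrime (k - l) (g - 1) = bb k := by
  intro k
  induction k with
  | zero => intro g; simp [sPrime_zero, bb_def 0]
  | succ k IH =>
    -- step lemma: value at g equals value at g-1
    have step : ∀ g : ℤ,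
        sPrime (k+1) g - ∑ l ∈ Finset.range (k+1), bb l * sPrime (k+1 - l) (g - 1)
        = sPrime (k+1) (g-1) - ∑ l ∈ Finset.range (k+1), bb l * sPrime (k+1 - l) (g - 1 - 1) := by
      intro g
      have h1 : sPrime (k+1) g = sPrime (k+1) (g-1) + 2 * sPrime k (g-3) := sPrime_pascal k g
      have h2 : ∑ l ∈ Finset.range (k+1), bb l * sPrime (k+1 - l) (g - 1)
          = ∑ l ∈ Finset.range (k+1), (bb l * sPrime (k+1 - l) (g - 1 - 1)
              + 2 * (bb l * sPrime (k - l) (g - 4))) := by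
        refine Finset.sum_congr rfl ?_
        intro l hl
        have hlk : l ≤ k := Nat.lt_succ_iff.mp (Finset.mem_range.mp hl)
        have hsub : k + 1 - l = (k - l) + 1 := by omega
        rw [hsub]
        have := sPrime_pascal (k - l) (g - 1)
        have e1 : g - 1 - 1 = g - 2 := by ring
        have e3 : g - 1 - 3 = g - 4 := by ring
        rw [e1, e3] at this
        have e2 : g - 1 - 1 = g - 2 := by ring
        rw [e2, this]
        ring
      have h3 : ∑ l ∈ Finset.range (k+1), (bb l * sPrime (k - l) (g - 4))
          = (∑ l ∈ Finset.range k, bb l * sPrime (k - l) (g - 4)) + bb k := by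
        rw [Finset.sum_range_succ]
        simp [sPrime_zero]
      have h4 := IH (g - 3)
      have e4 : g - 3 - 1 = g - 4 := by ring
      rw [e4] at h4
      rw [h1, h2, Finset.sum_add_distrib, ← Finset.mul_sum, h3]
      have : sPrime k (g - 3) = bb k + ∑ l ∈ Finset.range k, bb l * sPrime (k - l) (g - 4) := by
        linarith [h4]
      rw [this]
      ring
    -- now integer induction to show constant = value at 0 = bb (k+1)
    have base : sPrime (k+1) 0 - ∑ l ∈ Finset.range (k+1), bb l * sPrime (k+1 - l) (0 - 1)
        = bb (k+1) := by
      rw [bb_def (k+1)]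
      norm_num
    intro g
    induction g using Int.induction_on with
    | zero => exact base
    | succ i ih =>
      have := step ((i : ℤ) + 1)
      have e : (i : ℤ) + 1 - 1 = i := by ring
      rw [e] at this ⊢
      rw [this]; exact ih
    | pred i ih =>
      have := step (-(i : ℤ))
      rw [this] at ih
      exact ih

theorem sPrime_convolution_exists :
    ∃ b' : ℕ → ℚ, b' 0 = 1 ∧ b' 1 = 2 ∧
      ∀ k : ℕ, 1 ≤ k → ∀ g : ℤ,
        sPrime k g = ∑ l ∈ Finset.range (k + 1), b' l * sPrime (k - l) (g - 1) := by
  refine ⟨bb, ?_, ?_, ?_⟩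
  · rw [bb_def 0]; simp [sPrime_zero]
  · rw [bb_def 1, Finset.sum_range_one, bb_def 0]
    simp [sPrime, gbinom]
    norm_num
  · intro k _ g
    have h := key k g
    rw [Finset.sum_range_succ]
    simp only [Nat.sub_self, sPrime_zero, mul_one]
    linarith [h]
end

section
/- Uniqueness of doubly-indexed sequence from recursion and vanishing: there exists at most one pair of sequences (s_{k,g})_{k ≥ 0, g ≥ 1} and (b_l)_{l ≥ 0} of rational numbers satisfying: (1) b_0 = 1, b_1 = 2; (2) s_{0,g} = 1 and s_{1,g} = 2g − 2 for all g ≥ 1; (3) s_{k,2k} = 0 and s_{k,2k-1} = 0 for all k ≥ 2; (4) s_{k,g} = Σ_{l=0}^{k} b_l · s_{k-l, g-1} for all k ≥ 0 and g ≥ 2. -/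
/-- Uniqueness: at most one pair of sequences `(s, b)` satisfying the boundary
conditions, the vanishings `s_{k,2k} = s_{k,2k-1} = 0` for `k ≥ 2`, and the
convolution recursion. -/
theorem uniqueness_of_sequences
    (s t : ℕ → ℤ → ℚ) (b c : ℕ → ℚ)
    (hb0 : b 0 = 1) (hb1 : b 1 = 2) (hc0 : c 0 = 1) (hc1 : c 1 = 2)
    (hs0 : ∀ g : ℤ, 1 ≤ g → s 0 g = 1) (ht0 : ∀ g : ℤ, 1 ≤ g → t 0 g = 1)
    (hs1 : ∀ g : ℤ, 1 ≤ g → s 1 g = 2 * g - 2) (ht1 : ∀ g : ℤ, 1 ≤ g → t 1 g = 2 * g - 2)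
    (hsv : ∀ k : ℕ, 2 ≤ k → s k (2 * k) = 0 ∧ s k (2 * k - 1) = 0)
    (htv : ∀ k : ℕ, 2 ≤ k → t k (2 * k) = 0 ∧ t k (2 * k - 1) = 0)
    (hsr : ∀ k : ℕ, ∀ g : ℤ, 2 ≤ g →
      s k g = ∑ l ∈ Finset.range (k + 1), b l * s (k - l) (g - 1))
    (htr : ∀ k : ℕ, ∀ g : ℤ, 2 ≤ g →
      t k g = ∑ l ∈ Finset.range (k + 1), c l * t (k - l) (g - 1)) :
    (∀ k : ℕ, ∀ g : ℤ, 1 ≤ g → s k g = t k g) ∧ (∀ l : ℕ, b l = c l) := by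
  have key : ∀ k : ℕ, (∀ j, j < k → b j = c j ∧ ∀ g : ℤ, 1 ≤ g → s j g = t j g) →
      b k = c k ∧ ∀ g : ℤ, 1 ≤ g → s k g = t k g := by
    intro k IH
    match k with
    | 0 => exact ⟨hb0.trans hc0.symm, fun g hg => (hs0 g hg).trans (ht0 g hg).symm⟩
    | 1 => exact ⟨hb1.trans hc1.symm, fun g hg => (hs1 g hg).trans (ht1 g hg).symm⟩
    | (n+2) =>
      set k := n + 2 with hk
      have hk2 : 2 ≤ k := by omega
      -- step relation for the difference
      have step : ∀ g : ℤ, 2 ≤ g →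
          s k g - t k g = (s k (g - 1) - t k (g - 1)) + (b k - c k) := by
        intro g hg
        have hg1 : (1 : ℤ) ≤ g - 1 := by omega
        have hs := hsr k g hg
        have ht := htr k g hg
        rw [Finset.sum_range_succ] at hs ht
        rw [Finset.sum_range_succ'] at hs ht
        have hmid : ∀ l ∈ Finset.range (n + 1),
            b (l + 1) * s (k - (l + 1)) (g - 1) = c (l + 1) * t (k - (l + 1)) (g - 1) := by
          intro l hl
          simp only [Finset.mem_range] at hl
          have h1 : l + 1 < k := by omega
          obtain ⟨hbc, hst⟩ := IH (l + 1) h1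
          have h2 : k - (l + 1) < k := by omega
          obtain ⟨_, hst'⟩ := IH (k - (l + 1)) h2
          rw [hbc, hst' _ hg1]
        rw [Finset.sum_congr rfl hmid] at hs
        have hs00 : s 0 (g - 1) = 1 := hs0 _ hg1
        have ht00 : t 0 (g - 1) = 1 := ht0 _ hg1
        simp only [Nat.sub_zero, Nat.sub_self, hs00, ht00, hb0, hc0, mul_one, one_mul] at hs ht
        rw [hs, ht]; ring
      have e := b k - c k
      -- iterate the step relation
      have hiter : ∀ m : ℕ, s k (1 + m) - t k (1 + m)
          = (s k 1 - t k 1) + m * (b k - c k) := by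
        intro m
        induction m with
        | zero => simp
        | succ m ih =>
          have h2 : (2 : ℤ) ≤ 1 + (m + 1 : ℕ) := by push_cast; omega
          have := step (1 + (m + 1 : ℕ)) h2
          have harg : (1 : ℤ) + (m + 1 : ℕ) - 1 = 1 + (m : ℕ) := by push_cast; ring
          rw [harg, ih] at this
          rw [this]; push_cast; ring
      -- vanishing
      obtain ⟨hsv1, hsv2⟩ := hsv k hk2
      obtain ⟨htv1, htv2⟩ := htv k hk2
      have hm1 : (1 : ℤ) + ((2 * k - 1 : ℕ) : ℤ) = 2 * k := by push_cast; omega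
      have hm2 : (1 : ℤ) + ((2 * k - 2 : ℕ) : ℤ) = 2 * k - 1 := by push_cast; omega
      have h1 := hiter (2 * k - 1)
      have h2 := hiter (2 * k - 2)
      rw [hm1, hsv1, htv1] at h1
      rw [hm2, hsv2, htv2] at h2
      have hcast : ((2 * k - 1 : ℕ) : ℚ) = ((2 * k - 2 : ℕ) : ℚ) + 1 := by
        push_cast [Nat.cast_sub (by omega : 1 ≤ 2 * k), Nat.cast_sub (by omega : 2 ≤ 2 * k)]
        ring
      have hbc : b k = c k := by
        have h3 := h1
        rw [hcast] at h3
        linear_combination h2 - h3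
      have hd1 : s k 1 - t k 1 = 0 := by
        rw [hbc] at h1
        simp at h1
        linarith [h1]
      refine ⟨hbc, fun g hg => ?_⟩
      have hgm : g = 1 + ((g - 1).toNat : ℤ) := by omega
      have := hiter (g - 1).toNat
      rw [← hgm, hd1, hbc] at this
      simp at this
      linarith [this]
  have main : ∀ k : ℕ, b k = c k ∧ ∀ g : ℤ, 1 ≤ g → s k g = t k g := by
    intro k
    induction k using Nat.strong_induction_on with
    | _ k IH => exact key k IH
  exact ⟨fun k g hg => (main k).2 g hg, fun l => (main l).1⟩
end

section
/- Determination of C and D from vanishings: Let A, B, C, D, C̃, D̃ ∈ ℚ[[z]] have constant term 1, with C, C̃ and D, D̃ agreeing in degree ≤ 0. Suppose that for every k ≥ 2, the degree-k coefficient of A^{7(k-1)} B^{25} C^{k-1} D^{-1} vanishes and the degree-k coefficient of A^{7(k-1)+1} B^{25} C^{k} D^{-1} vanishes, and the same two vanishings hold with C, D replaced by C̃, D̃. Suppose further that the degree-1 coefficients of C and C̃ agree and of D and D̃ agree. Then C = C̃ and D = D̃. -/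
open PowerSeries

-- EqBelow preservation under mul
lemma VA_mul_eqB {k : ℕ} {X X' Y Y' : PowerSeries ℚ}
    (hX : ∀ j < k, coeff (R := ℚ) j X = coeff (R := ℚ) j X')
    (hY : ∀ j < k, coeff (R := ℚ) j Y = coeff (R := ℚ) j Y') :
    ∀ j < k, coeff (R := ℚ) j (X * Y) = coeff (R := ℚ) j (X' * Y') := by
  intro j hj
  rw [coeff_mul, coeff_mul]
  refine Finset.sum_congr rfl fun p hp => ?_
  rw [Finset.HasAntidiagonal.mem_antidiagonal] at hp
  rw [hX p.1 (by omega), hY p.2 (by omega)]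

lemma VA_pow_eqB {k : ℕ} {X X' : PowerSeries ℚ}
    (hX : ∀ j < k, coeff (R := ℚ) j X = coeff (R := ℚ) j X') (n : ℕ) :
    ∀ j < k, coeff (R := ℚ) j (X ^ n) = coeff (R := ℚ) j (X' ^ n) := by
  induction n with
  | zero => simp
  | succ n IH =>
    rw [pow_succ, pow_succ]
    exact VA_mul_eqB IH hX

lemma VA_const_inv (Z : (PowerSeries ℚ)ˣ) (hZ : constantCoeff (R := ℚ) (Z : PowerSeries ℚ) = 1) :
    constantCoeff (R := ℚ) ((Z⁻¹ : (PowerSeries ℚ)ˣ) : PowerSeries ℚ) = 1 := by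
  have h := congrArg (constantCoeff (R := ℚ)) (Units.mul_inv Z)
  rw [map_mul, map_one, hZ, one_mul] at h
  exact h

lemma VA_inv_eqB {k : ℕ} {X X' : (PowerSeries ℚ)ˣ}
    (hX0 : constantCoeff (R := ℚ) (X : PowerSeries ℚ) = 1)
    (hX0' : constantCoeff (R := ℚ) (X' : PowerSeries ℚ) = 1)
    (hX : ∀ j < k, coeff (R := ℚ) j (X : PowerSeries ℚ) = coeff (R := ℚ) j (X' : PowerSeries ℚ)) :
    ∀ j < k, coeff (R := ℚ) j ((X⁻¹ : (PowerSeries ℚ)ˣ) : PowerSeries ℚ)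
      = coeff (R := ℚ) j ((X'⁻¹ : (PowerSeries ℚ)ˣ) : PowerSeries ℚ) := by
  intro j
  induction j using Nat.strong_induction_on with
  | _ j IH =>
  intro hj
  have e : ∀ (Z : (PowerSeries ℚ)ˣ), constantCoeff (R := ℚ) (Z : PowerSeries ℚ) = 1 →
      coeff (R := ℚ) j ((Z⁻¹ : (PowerSeries ℚ)ˣ) : PowerSeries ℚ)
        = coeff (R := ℚ) j (1 : PowerSeries ℚ)
          - ∑ i ∈ Finset.range j, coeff (R := ℚ) (i + 1) (Z : PowerSeries ℚ) *
              coeff (R := ℚ) (j - (i + 1)) ((Z⁻¹ : (PowerSeries ℚ)ˣ) : PowerSeries ℚ) := by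
    intro Z hZ
    have h1 : coeff (R := ℚ) j ((Z : PowerSeries ℚ) * ((Z⁻¹ : (PowerSeries ℚ)ˣ) : PowerSeries ℚ))
        = coeff (R := ℚ) j (1 : PowerSeries ℚ) := by rw [Units.mul_inv]
    rw [coeff_mul, Finset.Nat.sum_antidiagonal_eq_sum_range_succ_mk,
      Finset.sum_range_succ'] at h1
    simp only [Nat.sub_zero, coeff_zero_eq_constantCoeff, hZ, one_mul] at h1
    linarith [h1]
  rw [e X hX0, e X' hX0']
  congr 1
  refine Finset.sum_congr rfl fun i hi => ?_
  rw [Finset.mem_range] at hi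
  rw [hX (i + 1) (by omega), IH (j - (i + 1)) (by omega) (by omega)]

-- difference at degree k for products
lemma VA_mul_diff {k : ℕ} (hk : 1 ≤ k) {X X' Y Y' : PowerSeries ℚ}
    (hX0 : constantCoeff (R := ℚ) X = 1) (hX0' : constantCoeff (R := ℚ) X' = 1)
    (hY0 : constantCoeff (R := ℚ) Y = 1) (hY0' : constantCoeff (R := ℚ) Y' = 1)
    (hX : ∀ j < k, coeff (R := ℚ) j X = coeff (R := ℚ) j X')
    (hY : ∀ j < k, coeff (R := ℚ) j Y = coeff (R := ℚ) j Y') :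
    coeff (R := ℚ) k (X * Y) - coeff (R := ℚ) k (X' * Y') =
      (coeff (R := ℚ) k X - coeff (R := ℚ) k X') + (coeff (R := ℚ) k Y - coeff (R := ℚ) k Y') := by
  obtain ⟨m, rfl⟩ : ∃ m, k = m + 1 := ⟨k - 1, by omega⟩
  have peel : ∀ F : ℕ → ℚ, ∑ i ∈ Finset.range (m + 2), F i
      = F 0 + (∑ i ∈ Finset.range m, F (i + 1)) + F (m + 1) := by
    intro F
    rw [Finset.sum_range_succ', Finset.sum_range_succ]
    ring
  rw [coeff_mul, coeff_mul, Finset.Nat.sum_antidiagonal_eq_sum_range_succ_mk,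
    Finset.Nat.sum_antidiagonal_eq_sum_range_succ_mk, peel, peel]
  have hmid : ∀ i ∈ Finset.range m,
      coeff (R := ℚ) (i + 1) X * coeff (R := ℚ) (m + 1 - (i + 1)) Y
        = coeff (R := ℚ) (i + 1) X' * coeff (R := ℚ) (m + 1 - (i + 1)) Y' := by
    intro i hi
    rw [Finset.mem_range] at hi
    rw [hX _ (by omega), hY _ (by omega)]
  rw [Finset.sum_congr rfl hmid]
  simp only [Nat.sub_self, Nat.sub_zero, coeff_zero_eq_constantCoeff, hX0, hX0', hY0, hY0']
  ring

lemma VA_pow_diff {k : ℕ} (hk : 1 ≤ k) {X X' : PowerSeries ℚ}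
    (hX0 : constantCoeff (R := ℚ) X = 1) (hX0' : constantCoeff (R := ℚ) X' = 1)
    (hX : ∀ j < k, coeff (R := ℚ) j X = coeff (R := ℚ) j X') (n : ℕ) :
    coeff (R := ℚ) k (X ^ n) - coeff (R := ℚ) k (X' ^ n) = n * (coeff (R := ℚ) k X - coeff (R := ℚ) k X') := by
  induction n with
  | zero => simp
  | succ n IH =>
    rw [pow_succ, pow_succ,
      VA_mul_diff hk (by rw [map_pow, hX0, one_pow]) (by rw [map_pow, hX0', one_pow])
        hX0 hX0' (VA_pow_eqB hX n) hX, IH]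
    push_cast
    ring

lemma VA_inv_diff {k : ℕ} (hk : 1 ≤ k) {X X' : (PowerSeries ℚ)ˣ}
    (hX0 : constantCoeff (R := ℚ) (X : PowerSeries ℚ) = 1)
    (hX0' : constantCoeff (R := ℚ) (X' : PowerSeries ℚ) = 1)
    (hX : ∀ j < k, coeff (R := ℚ) j (X : PowerSeries ℚ) = coeff (R := ℚ) j (X' : PowerSeries ℚ)) :
    coeff (R := ℚ) k ((X⁻¹ : (PowerSeries ℚ)ˣ) : PowerSeries ℚ)
      - coeff (R := ℚ) k ((X'⁻¹ : (PowerSeries ℚ)ˣ) : PowerSeries ℚ)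
      = -(coeff (R := ℚ) k (X : PowerSeries ℚ) - coeff (R := ℚ) k (X' : PowerSeries ℚ)) := by
  have h := VA_mul_diff hk hX0 hX0' (VA_const_inv X hX0) (VA_const_inv X' hX0') hX
    (VA_inv_eqB hX0 hX0' hX)
  rw [Units.mul_inv, Units.mul_inv, sub_self] at h
  linarith [h]

/-- Proposition 4.5: the series `C` and `D` are determined by `A`, `B`, their
coefficients in degree `≤ 1`, and the vanishing of the degree-`k` coefficients of
`A^{7(k-1)} B^{25} C^{k-1} D^{-1}` and `A^{7(k-1)+1} B^{25} C^{k} D^{-1}` for all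
`k ≥ 2`. -/
theorem C_D_determined_by_vanishings
    (A B C D C' D' : (PowerSeries ℚ)ˣ)
    (hA : constantCoeff (R := ℚ) (A : PowerSeries ℚ) = 1)
    (hB : constantCoeff (R := ℚ) (B : PowerSeries ℚ) = 1)
    (hC : constantCoeff (R := ℚ) (C : PowerSeries ℚ) = 1)
    (hD : constantCoeff (R := ℚ) (D : PowerSeries ℚ) = 1)
    (hC' : constantCoeff (R := ℚ) (C' : PowerSeries ℚ) = 1)
    (hD' : constantCoeff (R := ℚ) (D' : PowerSeries ℚ) = 1)
    (hC1 : coeff (R := ℚ) 1 (C : PowerSeries ℚ) = coeff (R := ℚ) 1 (C' : PowerSeries ℚ))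
    (hD1 : coeff (R := ℚ) 1 (D : PowerSeries ℚ) = coeff (R := ℚ) 1 (D' : PowerSeries ℚ))
    (hvan : ∀ k : ℕ, 2 ≤ k →
      coeff (R := ℚ) k ((A ^ ((7 * (k - 1) : ℕ) : ℤ) * B ^ (25 : ℤ) * C ^ ((k - 1 : ℕ) : ℤ) *
        D ^ (-1 : ℤ) : (PowerSeries ℚ)ˣ) : PowerSeries ℚ) = 0 ∧
      coeff (R := ℚ) k ((A ^ ((7 * (k - 1) + 1 : ℕ) : ℤ) * B ^ (25 : ℤ) * C ^ ((k : ℕ) : ℤ) *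
        D ^ (-1 : ℤ) : (PowerSeries ℚ)ˣ) : PowerSeries ℚ) = 0)
    (hvan' : ∀ k : ℕ, 2 ≤ k →
      coeff (R := ℚ) k ((A ^ ((7 * (k - 1) : ℕ) : ℤ) * B ^ (25 : ℤ) * C' ^ ((k - 1 : ℕ) : ℤ) *
        D' ^ (-1 : ℤ) : (PowerSeries ℚ)ˣ) : PowerSeries ℚ) = 0 ∧
      coeff (R := ℚ) k ((A ^ ((7 * (k - 1) + 1 : ℕ) : ℤ) * B ^ (25 : ℤ) * C' ^ ((k : ℕ) : ℤ) *
        D' ^ (-1 : ℤ) : (PowerSeries ℚ)ˣ) : PowerSeries ℚ) = 0) :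
    (C : PowerSeries ℚ) = (C' : PowerSeries ℚ) ∧
      (D : PowerSeries ℚ) = (D' : PowerSeries ℚ) := by
  have key : ∀ k : ℕ, coeff (R := ℚ) k (C : PowerSeries ℚ) = coeff (R := ℚ) k (C' : PowerSeries ℚ) ∧
      coeff (R := ℚ) k (D : PowerSeries ℚ) = coeff (R := ℚ) k (D' : PowerSeries ℚ) := by
    intro k
    induction k using Nat.strong_induction_on with
    | _ k IH =>
    match k with
    | 0 => simp [hC, hD, hC', hD']
    | 1 => exact ⟨hC1, hD1⟩
    | (n + 2) =>
      set K : ℕ := n + 2 with hKdef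
      have hK1 : K - 1 = n + 1 := by omega
      have hCb : ∀ j < K, coeff (R := ℚ) j (C : PowerSeries ℚ) = coeff (R := ℚ) j (C' : PowerSeries ℚ) :=
        fun j hj => (IH j hj).1
      have hDb : ∀ j < K, coeff (R := ℚ) j (D : PowerSeries ℚ) = coeff (R := ℚ) j (D' : PowerSeries ℚ) :=
        fun j hj => (IH j hj).2
      obtain ⟨h1, h2⟩ := hvan K (by omega)
      obtain ⟨h1', h2'⟩ := hvan' K (by omega)
      rw [hK1] at h1 h2 h1' h2'
      simp only [zpow_natCast, zpow_ofNat, zpow_neg_one, Units.val_mul, Units.val_pow_eq_pow_val]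
        at h1 h2 h1' h2'
      -- abbreviations for the "A^a * B^25" prefixes
      have hk1 : 1 ≤ K := by omega
      have hP : ∀ a : ℕ, constantCoeff (R := ℚ) ((A : PowerSeries ℚ) ^ a * (B : PowerSeries ℚ) ^ 25)
          = 1 := by
        intro a; rw [map_mul, map_pow, map_pow, hA, hB, one_pow, one_pow, one_mul]
      have hPC : ∀ (a m : ℕ), constantCoeff (R := ℚ)
          ((A : PowerSeries ℚ) ^ a * (B : PowerSeries ℚ) ^ 25 * (C : PowerSeries ℚ) ^ m)
          = 1 := by
        intro a m; rw [map_mul, hP, map_pow, hC, one_pow, one_mul]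
      have hPC' : ∀ (a m : ℕ), constantCoeff (R := ℚ)
          ((A : PowerSeries ℚ) ^ a * (B : PowerSeries ℚ) ^ 25 * (C' : PowerSeries ℚ) ^ m)
          = 1 := by
        intro a m; rw [map_mul, hP, map_pow, hC', one_pow, one_mul]
      have main : ∀ a m : ℕ,
          coeff (R := ℚ) K ((A : PowerSeries ℚ) ^ a * (B : PowerSeries ℚ) ^ 25 *
              (C : PowerSeries ℚ) ^ m * ((D⁻¹ : (PowerSeries ℚ)ˣ) : PowerSeries ℚ))
            - coeff (R := ℚ) K ((A : PowerSeries ℚ) ^ a * (B : PowerSeries ℚ) ^ 25 *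
              (C' : PowerSeries ℚ) ^ m * ((D'⁻¹ : (PowerSeries ℚ)ˣ) : PowerSeries ℚ))
          = m * (coeff (R := ℚ) K (C : PowerSeries ℚ) - coeff (R := ℚ) K (C' : PowerSeries ℚ))
            - (coeff (R := ℚ) K (D : PowerSeries ℚ) - coeff (R := ℚ) K (D' : PowerSeries ℚ)) := by
        intro a m
        have ePC : ∀ j < K, coeff (R := ℚ) j ((A : PowerSeries ℚ) ^ a * (B : PowerSeries ℚ) ^ 25 *
            (C : PowerSeries ℚ) ^ m) = coeff (R := ℚ) j ((A : PowerSeries ℚ) ^ a *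
            (B : PowerSeries ℚ) ^ 25 * (C' : PowerSeries ℚ) ^ m) :=
          VA_mul_eqB (fun j _ => rfl) (VA_pow_eqB hCb m)
        rw [VA_mul_diff hk1 (hPC a m) (hPC' a m) (VA_const_inv D hD) (VA_const_inv D' hD')
            ePC (VA_inv_eqB hD hD' hDb),
          VA_mul_diff hk1 (hP a) (hP a) (by rw [map_pow, hC, one_pow])
            (by rw [map_pow, hC', one_pow]) (fun j _ => rfl) (VA_pow_eqB hCb m),
          VA_pow_diff hk1 hC hC' hCb m, VA_inv_diff hk1 hD hD' hDb]
        ring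
      have e1 := main (7 * (n + 1)) (n + 1)
      have e2 := main (7 * (n + 1) + 1) K
      rw [h1, h1'] at e1
      rw [h2, h2'] at e2
      have hcast : ((K : ℕ) : ℚ) = (n : ℚ) + 2 := by rw [hKdef]; push_cast; ring
      rw [hcast] at e2
      push_cast at e1
      have hdC : coeff (R := ℚ) K (C : PowerSeries ℚ) = coeff (R := ℚ) K (C' : PowerSeries ℚ) := by
        linear_combination e1 - e2
      have hdD : coeff (R := ℚ) K (D : PowerSeries ℚ) = coeff (R := ℚ) K (D' : PowerSeries ℚ) := by
        linear_combination e1 + ((n : ℚ) + 1) * hdC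
      exact ⟨hdC, hdD⟩
  refine ⟨PowerSeries.ext fun k => (key k).1, PowerSeries.ext fun k => (key k).2⟩
end
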